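/- arXiv:1804.05715 — 2 statements merged into one kernel-verified Lean document; each statement's English description precedes it below -/
import Mathlib

section
/- If B : ℤ² × ℤ² → ℝ satisfies the cocycle property B(x,y) + B(y,z) = B(x,z) for all x,y,z, and the recovery property ω(x) = min(B(x,x+e₁), B(x,x+e₂)) for all x, then any infinite up-right path x₀,x₁,… with ω(x_i) = B(x_i, x_{i+1}) for all i ≥ 0 is an infinite geodesic: for every n, ∑_{i=0}^{n−1} ω(x_i) = G(x₀, x_n). -/
/-!
Summing `ω(x_i) = B(x_i, x_{i+1})` along the path telescopes, by the cocycle property, to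
`B(x₀, x_n)`. Along any other up-right path from `x₀` to `x_n` the recovery property gives
`ω(y_i) ≤ B(y_i, y_{i+1})`, so its weight is at most the same telescoped value `B(x₀, x_n)`.
-/

/-- An up-right path of length `n`: each step is `e₁` or `e₂`. -/
def UpRight (p : ℕ → ℤ × ℤ) (n : ℕ) : Prop :=
  ∀ i, i < n → p (i + 1) = p i + (1, 0) ∨ p (i + 1) = p i + (0, 1)

/-- Last-passage time from `x` to `y`, omitting the weight at the terminal point. -/
noncomputable def G (ω : ℤ × ℤ → ℝ) (x y : ℤ × ℤ) : ℝ :=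
  sSup {s : ℝ | ∃ (n : ℕ) (p : ℕ → ℤ × ℤ), p 0 = x ∧ p n = y ∧ UpRight p n ∧
    (n : ℤ) = (y.1 - x.1) + (y.2 - x.2) ∧ s = ∑ i ∈ Finset.range n, ω (p i)}

open Finset

section Cocycle

variable {α M : Type*} [AddCommGroup M] {B : α → α → M}

theorem cocycle_self (hcoc : ∀ x y z, B x y + B y z = B x z) (x : α) : B x x = 0 :=
  add_eq_left.mp (hcoc x x x)

theorem sum_range_cocycle (hcoc : ∀ x y z, B x y + B y z = B x z) (q : ℕ → α) (n : ℕ) :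
    ∑ i ∈ range n, B (q i) (q (i + 1)) = B (q 0) (q n) := by
  induction n with
  | zero => simp [cocycle_self hcoc]
  | succ n ih => rw [sum_range_succ, ih, hcoc]

end Cocycle

theorem UpRight.mono {p : ℕ → ℤ × ℤ} {m n : ℕ} (hp : UpRight p n) (hmn : m ≤ n) :
    UpRight p m :=
  fun i hi => hp i (hi.trans_le hmn)

theorem UpRight.natCast_eq {p : ℕ → ℤ × ℤ} {n : ℕ} (hp : UpRight p n) :
    (n : ℤ) = ((p n).1 - (p 0).1) + ((p n).2 - (p 0).2) := by
  induction n with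
  | zero => simp
  | succ n ih =>
    have := ih (hp.mono n.le_succ)
    rcases hp n n.lt_succ_self with h | h <;> simp only [h, Prod.fst_add, Prod.snd_add] <;>
      push_cast <;> linarith

theorem sum_le_cocycle_of_upRight {ω : ℤ × ℤ → ℝ} {B : ℤ × ℤ → ℤ × ℤ → ℝ}
    (hcoc : ∀ x y z, B x y + B y z = B x z)
    (hle : ∀ x, ω x ≤ min (B x (x + (1, 0))) (B x (x + (0, 1))))
    {q : ℕ → ℤ × ℤ} {n : ℕ} (hq : UpRight q n) :
    ∑ i ∈ range n, ω (q i) ≤ B (q 0) (q n) := by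
  rw [← sum_range_cocycle hcoc]
  refine sum_le_sum fun i hi => ?_
  rcases hq i (mem_range.mp hi) with h | h <;> rw [h]
  exacts [(hle _).trans (min_le_left _ _), (hle _).trans (min_le_right _ _)]

theorem G_eq_of_forall_le {ω : ℤ × ℤ → ℝ} {x y : ℤ × ℤ} {p : ℕ → ℤ × ℤ} {n : ℕ}
    (hp0 : p 0 = x) (hpn : p n = y) (hp : UpRight p n)
    (hmax : ∀ (m : ℕ) (q : ℕ → ℤ × ℤ), q 0 = x → q m = y → UpRight q m →
      ∑ i ∈ range m, ω (q i) ≤ ∑ i ∈ range n, ω (p i)) :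
    G ω x y = ∑ i ∈ range n, ω (p i) := by
  subst hp0 hpn
  refine IsGreatest.csSup_eq ⟨⟨n, p, rfl, rfl, hp, hp.natCast_eq, rfl⟩, ?_⟩
  rintro _ ⟨m, q, hq0, hqm, hq, -, rfl⟩
  exact hmax m q hq0 hqm hq

/-- A path following the minimal gradient of a recovering cocycle is a geodesic. -/
theorem cocycle_path_is_geodesic (ω : ℤ × ℤ → ℝ) (B : ℤ × ℤ → ℤ × ℤ → ℝ)
    (hcoc : ∀ x y z : ℤ × ℤ, B x y + B y z = B x z)
    (hrec : ∀ x : ℤ × ℤ, ω x = min (B x (x + (1, 0))) (B x (x + (0, 1))))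
    (p : ℕ → ℤ × ℤ)
    (hpath : ∀ i : ℕ, p (i + 1) = p i + (1, 0) ∨ p (i + 1) = p i + (0, 1))
    (hmin : ∀ i : ℕ, ω (p i) = B (p i) (p (i + 1))) :
    ∀ n : ℕ, ∑ i ∈ Finset.range n, ω (p i) = G ω (p 0) (p n) := by
  intro n
  have hsum : ∑ i ∈ range n, ω (p i) = B (p 0) (p n) := by
    rw [← sum_range_cocycle hcoc]
    exact sum_congr rfl fun i _ => hmin i
  refine (G_eq_of_forall_le rfl rfl (fun i _ => hpath i) fun m q hq0 hqm hq => ?_).symm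
  rw [hsum, ← hq0, ← hqm]
  exact sum_le_cocycle_of_upRight hcoc (fun x => (hrec x).le) hq
end

section
/- Cocycle ergodic theorem along rays: let B : Ω × ℤ² × ℤ² → ℝ be a stationary L¹ cocycle, i.e., B(ω,x,y) + B(ω,y,z) = B(ω,x,z), B(T_z ω, x, y) = B(ω, x+z, y+z), and E|B(·,x,y)| < ∞, where {T_z} is an ergodic group of measure-preserving shifts. Then for every ξ ∈ ℤ₊², B(ω, 0, nξ)/n → E[B(0,e₁)]·(ξ·e₁) + E[B(0,e₂)]·(ξ·e₂) almost surely as n → ∞. -/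
open MeasureTheory Filter Topology

/-!
Along a ray the cocycle is a Birkhoff sum, `B(ω, 0, nξ) = ∑_{k<n} B(T_ξ^k ω, 0, ξ)`, but `T_ξ`
alone need not be ergodic. The event `limsup_n B(ω, 0, nξ)/n > β` is nevertheless invariant,
up to a null set, under every shift `T_z`: shifting changes `B(ω, 0, nξ)` by an amount that is
`o(n)` almost surely, by Borel–Cantelli. Ergodicity of the whole group makes the event trivial,
and the maximal ergodic inequality for `T_ξ` excludes probability one when
`β > E B(0, ξ)`. Applied to `B` and `-B` this identifies the limit as `E B(0, ξ)`, which is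
additive, hence linear, in `ξ`.
-/

theorem MeasureTheory.MeasurePreserving.integral_comp_of_aestronglyMeasurable
    {α β E : Type*} [MeasurableSpace α] [MeasurableSpace β] [NormedAddCommGroup E]
    [NormedSpace ℝ E] {μ : Measure α} {ν : Measure β} {τ : α → β}
    (hτ : MeasurePreserving τ μ ν) {g : β → E} (hg : AEStronglyMeasurable g ν) :
    ∫ ω, g (τ ω) ∂μ = ∫ ω, g ω ∂ν := by
  rw [← hτ.map_eq] at hg ⊢
  exact (integral_map hτ.aemeasurable hg).symm

section BorelCantelli

variable {Ω : Type*} [MeasurableSpace Ω] {μ : Measure Ω} [IsProbabilityMeasure μ]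
  {g : Ω → ℝ} {τ : ℕ → Ω → Ω}

theorem ae_eventually_abs_comp_le_mul (hg : Integrable g μ)
    (hτ : ∀ n, MeasurePreserving (τ n) μ μ) {c : ℝ} (hc : 0 < c) :
    ∀ᵐ ω ∂μ, ∀ᶠ n : ℕ in atTop, |g (τ n ω)| ≤ c * n := by
  set s : ℕ → Set Ω := fun n => {ω | |g ω| / c ∈ Set.Ioi (n : ℝ)}
  have hs : ∀ n, NullMeasurableSet (s n) μ := fun n =>
    nullMeasurableSet_lt aemeasurable_const (hg.aemeasurable.abs.div_const c)
  have hsum : ∑' n, μ (τ n ⁻¹' s n) ≠ ⊤ := by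
    simp_rw [fun n => (hτ n).measure_preimage (hs n)]
    let _ : MeasureSpace Ω := ⟨μ⟩
    exact (ProbabilityTheory.tsum_prob_mem_Ioi_lt_top (hg.abs.div_const c)
      fun ω => by positivity).ne
  filter_upwards [ae_eventually_notMem hsum] with ω hω
  filter_upwards [hω] with n hn
  simpa [s, div_le_iff₀ hc, mul_comm] using hn

theorem ae_tendsto_comp_div_atTop_zero (hg : Integrable g μ)
    (hτ : ∀ n, MeasurePreserving (τ n) μ μ) :
    ∀ᵐ ω ∂μ, Tendsto (fun n : ℕ => g (τ n ω) / n) atTop (𝓝 0) := by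
  have hbound := ae_all_iff.2 fun m : ℕ =>
    ae_eventually_abs_comp_le_mul hg hτ (c := 1 / (m + 1)) (by positivity)
  filter_upwards [hbound] with ω hω
  refine Metric.tendsto_nhds.2 fun ε hε => ?_
  obtain ⟨m, hm⟩ := exists_nat_one_div_lt hε
  filter_upwards [hω m, eventually_gt_atTop 0] with n hn hn0
  have hn0' : (0 : ℝ) < n := Nat.cast_pos.2 hn0
  rw [Real.dist_eq, sub_zero, abs_div, Nat.abs_cast, div_lt_iff₀ hn0']
  exact hn.trans_lt (by gcongr)

end BorelCantelli

theorem frequently_mul_lt_of_tendsto_sub_div {u v : ℕ → ℝ}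
    (huv : Tendsto (fun n : ℕ => (u n - v n) / n) atTop (𝓝 0)) {q q' : ℝ} (hq : q' < q)
    (h : ∃ᶠ n in atTop, q * n < u n) : ∃ᶠ n in atTop, q' * n < v n := by
  have hsmall := (Metric.tendsto_nhds.1 huv) (q - q') (sub_pos.2 hq)
  refine (h.and_eventually (hsmall.and (eventually_gt_atTop 0))).mono ?_
  rintro n ⟨hun, hdist, hn0⟩
  have hn0' : (0 : ℝ) < n := Nat.cast_pos.2 hn0
  rw [Real.dist_eq, sub_zero, abs_lt, lt_div_iff₀ hn0', div_lt_iff₀ hn0'] at hdist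
  nlinarith [hdist.2]

theorem tendsto_div_of_forall_rat_eventually {u : ℕ → ℝ} {L : ℝ}
    (hup : ∀ q : ℚ, L < q → ∀ᶠ n in atTop, u n ≤ q * n)
    (hlo : ∀ q : ℚ, (q : ℝ) < L → ∀ᶠ n in atTop, q * n ≤ u n) :
    Tendsto (fun n : ℕ => u n / n) atTop (𝓝 L) := by
  refine tendsto_order.2 ⟨fun a ha => ?_, fun a ha => ?_⟩
  · obtain ⟨q, haq, hqL⟩ := exists_rat_btwn ha
    filter_upwards [hlo q hqL, eventually_gt_atTop 0] with n hn hn0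
    exact haq.trans_le ((le_div_iff₀ (Nat.cast_pos.2 hn0)).2 hn)
  · obtain ⟨q, hLq, hqa⟩ := exists_rat_btwn ha
    filter_upwards [hup q hLq, eventually_gt_atTop 0] with n hn hn0
    exact ((div_le_iff₀ (Nat.cast_pos.2 hn0)).2 hn).trans_lt hqa

section MaximalErgodic

variable {Ω : Type*} {τ : Ω → Ω} {f : Ω → ℝ}

def birkhoffMax (τ : Ω → Ω) (f : Ω → ℝ) (N : ℕ) : Ω → ℝ :=
  partialSups (birkhoffSum τ f) N

theorem birkhoffMax_apply (N : ℕ) (ω : Ω) :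
    birkhoffMax τ f N ω = partialSups (fun k => birkhoffSum τ f k ω) N :=
  Pi.partialSups_apply _ _ _

theorem birkhoffMax_nonneg (N : ℕ) (ω : Ω) : 0 ≤ birkhoffMax τ f N ω := by
  rw [birkhoffMax_apply]
  simpa using le_partialSups_of_le (fun k => birkhoffSum τ f k ω) N.zero_le

theorem birkhoffMax_mono : Monotone (birkhoffMax τ f) :=
  (partialSups _).monotone

theorem birkhoffMax_add_one (N : ℕ) :
    birkhoffMax τ f (N + 1) = birkhoffMax τ f N ⊔ birkhoffSum τ f (N + 1) :=
  partialSups_add_one _ _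

theorem birkhoffMax_add_one_le (N : ℕ) (ω : Ω) :
    birkhoffMax τ f (N + 1) ω ≤ max 0 (f ω + birkhoffMax τ f N (τ ω)) := by
  rw [birkhoffMax_apply]
  refine partialSups_le _ _ _ fun k hk => ?_
  rcases k with _ | k
  · simp
  · rw [birkhoffSum_succ', birkhoffMax_apply]
    have hkN : k ≤ N := Nat.le_of_succ_le_succ hk
    exact le_max_of_le_right (by
      gcongr; exact le_partialSups_of_le (fun k => birkhoffSum τ f k (τ ω)) hkN)

variable [MeasurableSpace Ω] {μ : Measure Ω}

theorem measurable_birkhoffSum (hτ : Measurable τ) (hf : Measurable f) (n : ℕ) :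
    Measurable (birkhoffSum τ f n) :=
  Finset.measurable_sum _ fun k _ => hf.comp (hτ.iterate k)

theorem integrable_birkhoffSum (hτ : MeasurePreserving τ μ μ) (hf : Integrable f μ) (n : ℕ) :
    Integrable (birkhoffSum τ f n) μ :=
  integrable_finsetSum _ fun k _ => (hτ.iterate k).integrable_comp_of_integrable hf

theorem measurable_birkhoffMax (hτ : Measurable τ) (hf : Measurable f) (N : ℕ) :
    Measurable (birkhoffMax τ f N) := by
  induction N with
  | zero => simpa [birkhoffMax] using measurable_zero
  | succ N ih => rw [birkhoffMax_add_one]; exact ih.sup (measurable_birkhoffSum hτ hf _)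

theorem integrable_birkhoffMax (hτ : MeasurePreserving τ μ μ) (hf : Integrable f μ) (N : ℕ) :
    Integrable (birkhoffMax τ f N) μ := by
  induction N with
  | zero => simp [birkhoffMax]
  | succ N ih => rw [birkhoffMax_add_one]; exact ih.sup (integrable_birkhoffSum hτ hf _)

theorem setIntegral_birkhoffMax_pos_nonneg (hτ : MeasurePreserving τ μ μ) (hfm : Measurable f)
    (hf : Integrable f μ) (N : ℕ) :
    0 ≤ ∫ ω in {ω | 0 < birkhoffMax τ f (N + 1) ω}, f ω ∂μ := by
  set M := birkhoffMax τ f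
  set E := {ω | 0 < M (N + 1) ω}
  have hE : MeasurableSet E :=
    measurableSet_lt measurable_const (measurable_birkhoffMax hτ.measurable hfm _)
  have hM : ∀ n, Integrable (M n) μ := integrable_birkhoffMax hτ hf
  have hMτ : Integrable (fun ω => M N (τ ω)) μ := hτ.integrable_comp_of_integrable (hM N)
  have hsupp : ∫ ω in E, M (N + 1) ω ∂μ = ∫ ω, M (N + 1) ω ∂μ :=
    setIntegral_eq_integral_of_forall_compl_eq_zero fun ω hω =>
      le_antisymm (not_lt.1 hω) (birkhoffMax_nonneg _ ω)
  calc 0 ≤ ∫ ω, M (N + 1) ω ∂μ - ∫ ω, M N ω ∂μ :=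
        sub_nonneg.2 (integral_mono (hM N) (hM _) (birkhoffMax_mono N.le_succ))
    _ = ∫ ω in E, M (N + 1) ω ∂μ - ∫ ω, M N (τ ω) ∂μ := by
        rw [hsupp, hτ.integral_comp_of_aestronglyMeasurable (hM N).aestronglyMeasurable]
    _ ≤ ∫ ω in E, M (N + 1) ω ∂μ - ∫ ω in E, M N (τ ω) ∂μ :=
        sub_le_sub_left (setIntegral_le_integral hMτ
          (ae_of_all _ fun ω => birkhoffMax_nonneg N (τ ω))) _
    _ = ∫ ω in E, (M (N + 1) ω - M N (τ ω)) ∂μ :=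
        (integral_sub (hM _).integrableOn hMτ.integrableOn).symm
    _ ≤ ∫ ω in E, f ω ∂μ := by
        refine setIntegral_mono_on ((hM _).sub hMτ).integrableOn hf.integrableOn hE
          fun ω hω => ?_
        have hmax := (le_max_iff.1 (birkhoffMax_add_one_le N ω)).resolve_left (not_le.2 hω)
        linarith

theorem integral_nonneg_of_ae_exists_birkhoffSum_pos (hτ : MeasurePreserving τ μ μ)
    (hfm : Measurable f) (hf : Integrable f μ)
    (h : ∀ᵐ ω ∂μ, ∃ n, 0 < birkhoffSum τ f n ω) : 0 ≤ ∫ ω, f ω ∂μ := by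
  set E : ℕ → Set Ω := fun N => {ω | 0 < birkhoffMax τ f (N + 1) ω}
  have hE : ∀ N, MeasurableSet (E N) := fun N =>
    measurableSet_lt measurable_const (measurable_birkhoffMax hτ.measurable hfm _)
  have hEmono : Monotone E := fun N N' hN ω (hω : 0 < _) =>
    hω.trans_le (birkhoffMax_mono (Nat.succ_le_succ hN) ω)
  have hcover : ∀ᵐ ω ∂μ, ω ∈ ⋃ N, E N := by
    filter_upwards [h] with ω ⟨n, hn⟩
    rcases n with _ | n
    · simp at hn
    · refine Set.mem_iUnion.2 ⟨n, hn.trans_le ?_⟩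
      rw [birkhoffMax_apply]
      exact le_partialSups (fun k => birkhoffSum τ f k ω) (n + 1)
  have hlim := tendsto_setIntegral_of_monotone hE hEmono hf.integrableOn
  rw [Measure.restrict_eq_self_of_ae_mem hcover] at hlim
  exact ge_of_tendsto' hlim fun N => setIntegral_birkhoffMax_pos_nonneg hτ hfm hf N

end MaximalErgodic

structure IsErgodicShift {G Ω : Type*} [AddGroup G] [MeasurableSpace Ω] (μ : Measure Ω)
    (T : G → Ω → Ω) : Prop where
  measurePreserving : ∀ z, MeasurePreserving (T z) μ μ
  map_add : ∀ z w ω, T z (T w ω) = T (z + w) ω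
  map_zero : ∀ ω, T 0 ω = ω
  ergodic : ∀ s, MeasurableSet s → (∀ z, T z ⁻¹' s = s) → μ s = 0 ∨ μ s = 1

theorem IsErgodicShift.measure_eq_zero_or_one_of_ae_preimage_subset {G Ω : Type*} [AddGroup G]
    [Countable G] [MeasurableSpace Ω] {μ : Measure Ω} {T : G → Ω → Ω}
    (hT : IsErgodicShift μ T) {A : Set Ω} (hA : MeasurableSet A)
    (h : ∀ᵐ ω ∂μ, ∀ z, T z ω ∈ A → ω ∈ A) : μ A = 0 ∨ μ A = 1 := by
  set W := ⋃ z, T z ⁻¹' A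
  have hW : MeasurableSet W := .iUnion fun z => (hT.measurePreserving z).measurable hA
  have hWinv : ∀ w, T w ⁻¹' W = W := by
    intro w
    ext ω
    simp only [W, Set.mem_preimage, Set.mem_iUnion, hT.map_add]
    exact ⟨fun ⟨z, hz⟩ => ⟨z + w, hz⟩, fun ⟨z, hz⟩ => ⟨z - w, by rwa [sub_add_cancel]⟩⟩
  have hAW : A ⊆ W := fun ω hω => Set.mem_iUnion.2 ⟨0, by rwa [Set.mem_preimage, hT.map_zero]⟩
  have hWA : μ (W \ A) = 0 := by
    refine measure_mono_null ?_ (ae_iff.1 h)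
    rintro ω ⟨hωW, hωA⟩ hinv
    obtain ⟨z, hz⟩ := Set.mem_iUnion.1 hωW
    exact hωA (hinv z hz)
  rw [measure_eq_measure_of_null_sdiff hAW hWA]
  exact hT.ergodic W hW hWinv

structure IsStationaryCocycle {G Ω : Type*} [Add G] (T : G → Ω → Ω) (B : Ω → G → G → ℝ) :
    Prop where
  cocycle : ∀ ω x y z, B ω x y + B ω y z = B ω x z
  stationary : ∀ ω x y z, B (T z ω) x y = B ω (x + z) (y + z)

namespace IsStationaryCocycle

variable {G Ω : Type*} {T : G → Ω → Ω} {B : Ω → G → G → ℝ}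

theorem apply_self [Add G] (hB : IsStationaryCocycle T B) (ω : Ω) (x : G) : B ω x x = 0 := by
  linarith [hB.cocycle ω x x x]

theorem neg [Add G] (hB : IsStationaryCocycle T B) :
    IsStationaryCocycle T fun ω x y => -B ω x y where
  cocycle ω x y z := by rw [← neg_add, hB.cocycle]
  stationary ω x y z := by rw [hB.stationary]

theorem apply_zero_nsmul [AddMonoid G] (hB : IsStationaryCocycle T B) (ξ : G) (n : ℕ)
    (ω : Ω) : B ω 0 (n • ξ) = birkhoffSum (T ξ) (fun ω => B ω 0 ξ) n ω := by
  induction n generalizing ω with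
  | zero => simp [hB.apply_self]
  | succ n ih =>
    rw [birkhoffSum_succ', ← ih, hB.stationary, zero_add, ← succ_nsmul, hB.cocycle]

theorem apply_shift [AddCommMonoid G] (hB : IsStationaryCocycle T B) (ω : Ω) (y z : G) :
    B (T z ω) 0 y = B ω z 0 + B ω 0 y + B (T y ω) 0 z := by
  rw [hB.stationary, hB.stationary, zero_add, zero_add, add_comm z y, add_assoc, hB.cocycle,
    hB.cocycle]

theorem integral_apply_zero_add [AddCommMonoid G] [MeasurableSpace Ω] {μ : Measure Ω}
    (hB : IsStationaryCocycle T B) (hTμ : ∀ z, MeasurePreserving (T z) μ μ)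
    (hint : ∀ x y, Integrable (fun ω => B ω x y) μ) (x y : G) :
    ∫ ω, B ω 0 (x + y) ∂μ = ∫ ω, B ω 0 x ∂μ + ∫ ω, B ω 0 y ∂μ := by
  have hsplit : ∀ ω, B ω 0 (x + y) = B ω 0 x + B (T x ω) 0 y := fun ω => by
    rw [hB.stationary, zero_add, add_comm y, hB.cocycle]
  simp_rw [hsplit]
  have hint' : Integrable (fun ω => B (T x ω) 0 y) μ :=
    (hTμ x).integrable_comp_of_integrable (hint 0 y)
  rw [integral_add (hint 0 x) hint',
    (hTμ x).integral_comp_of_aestronglyMeasurable (hint 0 y).aestronglyMeasurable]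

end IsStationaryCocycle

theorem IsStationaryCocycle.integral_apply_zero_eq {Ω : Type*} [MeasurableSpace Ω]
    {μ : Measure Ω} {T : ℤ × ℤ → Ω → Ω} {B : Ω → ℤ × ℤ → ℤ × ℤ → ℝ}
    (hB : IsStationaryCocycle T B)
    (hTμ : ∀ z, MeasurePreserving (T z) μ μ)
    (hint : ∀ x y, Integrable (fun ω => B ω x y) μ) (ξ : ℤ × ℤ) :
    ∫ ω, B ω 0 ξ ∂μ = (∫ ω, B ω 0 (1, 0) ∂μ) * ξ.1 + (∫ ω, B ω 0 (0, 1) ∂μ) * ξ.2 := by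
  let mean : ℤ × ℤ →+ ℝ :=
    AddMonoidHom.mk' (fun x => ∫ ω, B ω 0 x ∂μ) (hB.integral_apply_zero_add hTμ hint)
  have hξ : ξ = ξ.1 • ((1 : ℤ), (0 : ℤ)) + ξ.2 • ((0 : ℤ), (1 : ℤ)) := by ext <;> simp
  have := congrArg mean hξ
  rw [map_add, map_zsmul, map_zsmul, zsmul_eq_mul, zsmul_eq_mul] at this
  rw [mul_comm, mul_comm _ (ξ.2 : ℝ)]
  exact this

section RaySlope

variable {G Ω : Type*} [AddMonoid G] {T : G → Ω → Ω} {B : Ω → G → G → ℝ}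

/-- The event `limsup_n B(ω, 0, nξ) / n > β`, written with rational slopes so that it is
measurable. -/
def raySlopeGt (B : Ω → G → G → ℝ) (ξ : G) (β : ℝ) : Set Ω :=
  {ω | ∃ q : ℚ, β < q ∧ ∃ᶠ n : ℕ in atTop, q * n < B ω 0 (n • ξ)}

theorem measurableSet_raySlopeGt [MeasurableSpace Ω]
    (hmeas : ∀ x y, Measurable fun ω => B ω x y) (ξ : G) (β : ℝ) :
    MeasurableSet (raySlopeGt B ξ β) := by
  simp only [raySlopeGt, frequently_atTop, Set.ofPred_exists, Set.ofPred_and, Set.ofPred_forall]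
  exact .iUnion fun q => (MeasurableSet.const _).inter <| .iInter fun N => .iUnion fun n =>
    (MeasurableSet.const _).inter (measurableSet_lt measurable_const (hmeas _ _))

end RaySlope

namespace IsStationaryCocycle

variable {G Ω : Type*} [MeasurableSpace Ω] {μ : Measure Ω} [IsProbabilityMeasure μ]
  {T : G → Ω → Ω} {B : Ω → G → G → ℝ}

/-- Shifting `ω` by `z` changes `B(ω, 0, nξ)` by `B(ω, z, 0) + B(T_{nξ} ω, 0, z)`, which is
`o(n)` almost surely by Borel–Cantelli. -/
theorem ae_mem_raySlopeGt_of_shift_mem [AddCommMonoid G] [Countable G]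
    (hB : IsStationaryCocycle T B) (hTμ : ∀ z, MeasurePreserving (T z) μ μ)
    (hint : ∀ x y, Integrable (fun ω => B ω x y) μ) (ξ : G) (β : ℝ) :
    ∀ᵐ ω ∂μ, ∀ z, T z ω ∈ raySlopeGt B ξ β → ω ∈ raySlopeGt B ξ β := by
  have hsmall := ae_all_iff.2 fun z =>
    ae_tendsto_comp_div_atTop_zero (hint 0 z) fun n => hTμ (n • ξ)
  filter_upwards [hsmall] with ω hω z ⟨q, hβq, hfreq⟩
  obtain ⟨q', hβq', hq'q⟩ := exists_rat_btwn hβq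
  refine ⟨q', hβq', frequently_mul_lt_of_tendsto_sub_div ?_ (mod_cast hq'q) hfreq⟩
  have hdiff : ∀ n : ℕ, (B (T z ω) 0 (n • ξ) - B ω 0 (n • ξ)) / n
      = B ω z 0 / n + B (T (n • ξ) ω) 0 z / n := fun n => by
    rw [hB.apply_shift, ← add_div]
    ring_nf
  simpa only [hdiff, zero_add] using (tendsto_const_div_atTop_nhds_zero_nat _).add (hω z)

theorem le_integral_of_ae_exists_lt [AddMonoid G] (hB : IsStationaryCocycle T B) {ξ : G}
    (hτ : MeasurePreserving (T ξ) μ μ) (hmeas : Measurable fun ω => B ω 0 ξ)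
    (hint : Integrable (fun ω => B ω 0 ξ) μ) {β : ℝ}
    (h : ∀ᵐ ω ∂μ, ∃ n : ℕ, β * n < B ω 0 (n • ξ)) : β ≤ ∫ ω, B ω 0 ξ ∂μ := by
  have hsum : ∀ n ω, birkhoffSum (T ξ) (fun ω => B ω 0 ξ - β) n ω = B ω 0 (n • ξ) - β * n :=
    fun n ω => by
      rw [hB.apply_zero_nsmul]
      simp [birkhoffSum, Finset.sum_sub_distrib, mul_comm]
  have := integral_nonneg_of_ae_exists_birkhoffSum_pos hτ (hmeas.sub_const β)
    (hint.sub (integrable_const β)) (h.mono fun ω ⟨n, hn⟩ => ⟨n, by rw [hsum]; linarith⟩)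
  rw [integral_sub hint (integrable_const β), integral_const, probReal_univ, one_smul] at this
  linarith

theorem ae_eventually_le_mul [AddCommGroup G] [Countable G] (hB : IsStationaryCocycle T B)
    (hT : IsErgodicShift μ T) (hmeas : ∀ x y, Measurable fun ω => B ω x y)
    (hint : ∀ x y, Integrable (fun ω => B ω x y) μ) (ξ : G) {α : ℝ}
    (hα : ∫ ω, B ω 0 ξ ∂μ < α) : ∀ᵐ ω ∂μ, ∀ᶠ n : ℕ in atTop, B ω 0 (n • ξ) ≤ α * n := by
  obtain ⟨β, hmeanβ, hβα⟩ := exists_between hα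
  set V := raySlopeGt B ξ β
  have hV : MeasurableSet V := measurableSet_raySlopeGt hmeas ξ β
  have hV01 := hT.measure_eq_zero_or_one_of_ae_preimage_subset hV
    (hB.ae_mem_raySlopeGt_of_shift_mem hT.measurePreserving hint ξ β)
  have hV1 : μ V ≠ 1 := fun h1 => by
    refine hmeanβ.not_ge (hB.le_integral_of_ae_exists_lt (hT.measurePreserving ξ) (hmeas 0 ξ)
      (hint 0 ξ) ?_)
    filter_upwards [mem_ae_iff.2 ((prob_compl_eq_zero_iff hV).2 h1)]
      with ω ⟨q, hβq, hfreq⟩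
    obtain ⟨n, hn⟩ := hfreq.exists
    exact ⟨n, lt_of_le_of_lt (by gcongr) hn⟩
  filter_upwards [measure_eq_zero_iff_ae_notMem.1 (hV01.resolve_right hV1)] with ω hω
  obtain ⟨q, hβq, hqα⟩ := exists_rat_btwn hβα
  have hnot : ¬ ∃ᶠ n : ℕ in atTop, q * n < B ω 0 (n • ξ) := fun hfreq => hω ⟨q, hβq, hfreq⟩
  have hev : ∀ᶠ n : ℕ in atTop, B ω 0 (n • ξ) ≤ q * n := by
    simpa only [not_frequently, not_lt] using hnot
  exact hev.mono fun n hn => hn.trans (by gcongr)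

theorem ae_tendsto_div [AddCommGroup G] [Countable G] (hB : IsStationaryCocycle T B)
    (hT : IsErgodicShift μ T) (hmeas : ∀ x y, Measurable fun ω => B ω x y)
    (hint : ∀ x y, Integrable (fun ω => B ω x y) μ) (ξ : G) :
    ∀ᵐ ω ∂μ, Tendsto (fun n : ℕ => B ω 0 (n • ξ) / n) atTop (𝓝 (∫ ω, B ω 0 ξ ∂μ)) := by
  have hup := ae_all_iff.2 fun q : ℚ => eventually_imp_distrib_left.2
    fun hq : ∫ ω, B ω 0 ξ ∂μ < q => hB.ae_eventually_le_mul hT hmeas hint ξ hq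
  have hlo := ae_all_iff.2 fun q : ℚ => eventually_imp_distrib_left.2
    fun hq : (q : ℝ) < ∫ ω, B ω 0 ξ ∂μ =>
    hB.neg.ae_eventually_le_mul hT (fun x y => (hmeas x y).neg) (fun x y => (hint x y).neg) ξ
      (α := -q) (by rw [integral_neg]; exact neg_lt_neg hq)
  filter_upwards [hup, hlo] with ω hωup hωlo
  exact tendsto_div_of_forall_rat_eventually hωup fun q hq =>
    (hωlo q hq).mono fun n hn => by linarith

end IsStationaryCocycle

/-- Ergodic theorem for stationary `L¹` cocycles along lattice rays:
`B(ω,0,nξ)/n → E[B(0,e₁)] ξ·e₁ + E[B(0,e₂)] ξ·e₂` almost surely. -/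
theorem cocycle_ergodic_theorem {Ω : Type*} [MeasurableSpace Ω] (μ : Measure Ω)
    [IsProbabilityMeasure μ] (T : ℤ × ℤ → Ω → Ω)
    (hTmeas : ∀ z, MeasurePreserving (T z) μ μ)
    (hTgroup : ∀ z w : ℤ × ℤ, ∀ ω : Ω, T z (T w ω) = T (z + w) ω)
    (hTzero : ∀ ω : Ω, T 0 ω = ω)
    (hErg : ∀ s : Set Ω, MeasurableSet s → (∀ z : ℤ × ℤ, T z ⁻¹' s = s) →
      μ s = 0 ∨ μ s = 1)
    (B : Ω → ℤ × ℤ → ℤ × ℤ → ℝ)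
    (hmeas : ∀ x y : ℤ × ℤ, Measurable fun ω => B ω x y)
    (hint : ∀ x y : ℤ × ℤ, Integrable (fun ω => B ω x y) μ)
    (hcoc : ∀ ω : Ω, ∀ x y z : ℤ × ℤ, B ω x y + B ω y z = B ω x z)
    (hstat : ∀ ω : Ω, ∀ x y z : ℤ × ℤ, B (T z ω) x y = B ω (x + z) (y + z)) :
    ∀ ξ : ℤ × ℤ, 0 ≤ ξ.1 → 0 ≤ ξ.2 →
      ∀ᵐ ω ∂μ, Tendsto (fun n : ℕ => B ω 0 ((n : ℤ) • ξ) / n) atTop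
        (nhds ((∫ ω', B ω' 0 (1, 0) ∂μ) * (ξ.1 : ℝ) +
               (∫ ω', B ω' 0 (0, 1) ∂μ) * (ξ.2 : ℝ))) := by
  intro ξ _ _
  have hB : IsStationaryCocycle T B := ⟨hcoc, hstat⟩
  have hT : IsErgodicShift μ T := ⟨hTmeas, hTgroup, hTzero, hErg⟩
  have hlim := hB.ae_tendsto_div hT hmeas hint ξ
  rw [hB.integral_apply_zero_eq hTmeas hint] at hlim
  simpa only [natCast_zsmul] using hlim
end
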